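/- arXiv:2003.12939 — 3 statements merged into one kernel-verified Lean document; each statement's English description precedes it below -/
import Mathlib

section
/- For all real x ≥ 0 and β ∈ (1, 2], e^{-x} ≤ 1 - x + x^β. -/
/-- For all real `x ≥ 0` and `β ∈ (1, 2]`, `e^{-x} ≤ 1 - x + x^β`. -/
theorem exp_neg_le_one_sub_add_rpow (x β : ℝ) (hx : 0 ≤ x) (hβ1 : 1 < β) (hβ2 : β ≤ 2) :
    Real.exp (-x) ≤ 1 - x + x ^ β := by
  rcases eq_or_lt_of_le hx with h0 | h0
  · simp [← h0, Real.zero_rpow (by linarith : β ≠ 0)]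
  rcases le_or_gt x 1 with hx1 | hx1
  · have h1 : Real.exp (-x) ≤ 1 / (1 + x) := by
      rw [div_eq_inv_mul, mul_one, le_inv_comm₀ (Real.exp_pos _) (by linarith)]
      calc (1 + x) = x + 1 := by ring
        _ ≤ Real.exp x := Real.add_one_le_exp x
        _ = (Real.exp (-x))⁻¹ := by rw [Real.exp_neg, inv_inv]
    refine h1.trans ?_
    rw [div_le_iff₀ (by linarith)]
    have h2 : x ^ (2:ℝ) ≤ x ^ β := Real.rpow_le_rpow_of_exponent_ge h0 hx1 hβ2
    have h3 : x ^ (2:ℝ) = x * x := by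
      rw [show (2:ℝ) = (2:ℕ) by norm_num, Real.rpow_natCast]; ring
    have h4 : 0 ≤ x ^ β := Real.rpow_nonneg hx β
    have h5 : x * x ≤ x ^ β := h3 ▸ h2
    generalize x ^ β = t at h4 h5 ⊢
    nlinarith [mul_nonneg hx h4]
  · have h1 : Real.exp (-x) ≤ 1 := by
      rw [Real.exp_le_one_iff]; linarith
    have h2 : x ^ (1:ℝ) ≤ x ^ β := Real.rpow_le_rpow_of_exponent_le hx1.le hβ1.le
    rw [Real.rpow_one] at h2
    linarith
end

section
/- There exists a constant C > 0 such that for all x ≥ 0 and all ε with 0 ≤ ε ≤ 1, (1 - Φ(x√(1-ε)))/(1 - Φ(x)) ≤ exp{C(1 + x²)ε}, where Φ is the standard normal distribution function. -/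
/-!
Write `Q x = ∫_x^∞ e^{-t²/2} dt`, so that `1 - Φ = Q / √(2π)`. For `y = x√(1-ε) ≤ x`,
`Q y ≤ Q x + (x - y) e^{-y²/2}`, where `x - y ≤ xε` and `e^{-y²/2} = e^{-x²/2} e^{x²ε/2}`.
The Mills-ratio bound `e^{-x²/2} ≤ (x + 1) Q x` (integrate the derivative of `-e^{-t²/2}/(t+1)`,
which is at most `e^{-t²/2}` for `t ≥ 0`) then gives
`Q y ≤ (1 + (x² + x)ε e^{x²ε/2}) Q x ≤ e^{2(1+x²)ε} Q x`.
-/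

/-- The standard normal cumulative distribution function. -/
noncomputable def stdGaussianCDF (x : ℝ) : ℝ :=
  (Real.sqrt (2 * Real.pi))⁻¹ * ∫ t in Set.Iic x, Real.exp (-t ^ 2 / 2)

open Real MeasureTheory Set Filter Topology

lemma integrable_exp_neg_sq_div_two : Integrable fun t : ℝ => exp (-t ^ 2 / 2) := by
  simpa [neg_div, div_eq_inv_mul] using integrable_exp_neg_mul_sq (b := 1 / 2) (by norm_num)

lemma integral_exp_neg_sq_div_two : ∫ t : ℝ, exp (-t ^ 2 / 2) = √(2 * π) := by
  simpa [neg_div, div_eq_inv_mul] using integral_gaussian (1 / 2)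

noncomputable def gaussianTail (x : ℝ) : ℝ := ∫ t in Ioi x, exp (-t ^ 2 / 2)

lemma gaussianTail_nonneg (x : ℝ) : 0 ≤ gaussianTail x :=
  setIntegral_nonneg measurableSet_Ioi fun _ _ => (exp_pos _).le

lemma one_sub_stdGaussianCDF (x : ℝ) :
    1 - stdGaussianCDF x = (√(2 * π))⁻¹ * gaussianTail x := by
  have hsplit := intervalIntegral.integral_Iic_add_Ioi (b := x)
    integrable_exp_neg_sq_div_two.integrableOn integrable_exp_neg_sq_div_two.integrableOn
  rw [integral_exp_neg_sq_div_two] at hsplit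
  have hs : √(2 * π) ≠ 0 := by positivity
  rw [stdGaussianCDF, gaussianTail, inv_mul_eq_div, inv_mul_eq_div, eq_div_iff hs, sub_mul,
    div_mul_cancel₀ _ hs]
  linarith

lemma hasDerivAt_neg_exp_neg_sq_div_two_div {t : ℝ} (ht : t + 1 ≠ 0) :
    HasDerivAt (fun u => -exp (-u ^ 2 / 2) / (u + 1))
      (exp (-t ^ 2 / 2) * (t ^ 2 + t + 1) / (t + 1) ^ 2) t := by
  have hsq : HasDerivAt (fun u : ℝ => -u ^ 2 / 2) (-t) t :=
    ((hasDerivAt_pow 2 t).neg.div_const 2).congr_deriv (by ring)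
  refine (hsq.exp.neg.div ((hasDerivAt_id t).add_const 1) ht).congr_deriv ?_
  simp only [id, Pi.neg_apply]
  field_simp
  ring

lemma exp_neg_sq_div_two_div_le_gaussianTail {x : ℝ} (hx : 0 ≤ x) :
    exp (-x ^ 2 / 2) / (x + 1) ≤ gaussianTail x := by
  have hlim : Tendsto (fun u => -exp (-u ^ 2 / 2) / (u + 1)) atTop (𝓝 0) := by
    have hsq : Tendsto (fun u : ℝ => -u ^ 2 / 2) atTop atBot :=
      (tendsto_neg_atBot_iff.2 (tendsto_pow_atTop two_ne_zero)).atBot_div_const two_pos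
    simpa using (tendsto_exp_atBot.comp hsq).neg.div_atTop
      (tendsto_atTop_add_const_right atTop 1 tendsto_id)
  have hFTC := integral_Ioi_of_hasDerivAt_of_nonneg'
    (fun t ht => hasDerivAt_neg_exp_neg_sq_div_two_div (by linarith [mem_Ici.1 ht]))
    (fun t ht => by have : 0 < t := hx.trans_lt ht; positivity) hlim
  have hle : ∫ t in Ioi x, exp (-t ^ 2 / 2) * (t ^ 2 + t + 1) / (t + 1) ^ 2 ≤ gaussianTail x := by
    refine integral_mono_of_nonneg ?_ integrable_exp_neg_sq_div_two.integrableOn ?_ <;>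
      filter_upwards [ae_restrict_mem measurableSet_Ioi] with t ht <;>
      have ht : 0 < t := hx.trans_lt ht
    · positivity
    · rw [div_le_iff₀ (by positivity)]
      gcongr
      nlinarith
  rw [hFTC] at hle
  simpa [neg_div] using hle

lemma gaussianTail_le_add {x y : ℝ} (hy : 0 ≤ y) (hyx : y ≤ x) :
    gaussianTail y ≤ gaussianTail x + (x - y) * exp (-y ^ 2 / 2) := by
  have hint := integrable_exp_neg_sq_div_two.integrableOn (s := Ioc y x)
  have hsplit : gaussianTail y = (∫ t in Ioc y x, exp (-t ^ 2 / 2)) + gaussianTail x := by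
    rw [gaussianTail, gaussianTail, ← Ioc_union_Ioi_eq_Ioi hyx,
      setIntegral_union (Ioc_disjoint_Ioi le_rfl) measurableSet_Ioi hint
        integrable_exp_neg_sq_div_two.integrableOn]
  have hseg : ∫ t in Ioc y x, exp (-t ^ 2 / 2) ≤ (x - y) * exp (-y ^ 2 / 2) := by
    calc ∫ t in Ioc y x, exp (-t ^ 2 / 2)
        ≤ ∫ _ in Ioc y x, exp (-y ^ 2 / 2) :=
          setIntegral_mono_on hint (integrableOn_const measure_Ioc_lt_top.ne) measurableSet_Ioc
            fun t ht => exp_le_exp.2 (by nlinarith [ht.1])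
      _ = (x - y) * exp (-y ^ 2 / 2) := by
          rw [setIntegral_const, volume_real_Ioc_of_le hyx, smul_eq_mul]
  linarith

lemma one_add_mul_exp_le_exp_add {a b : ℝ} (hb : 0 ≤ b) :
    1 + a * exp b ≤ exp (a + b) :=
  calc 1 + a * exp b ≤ (1 + a) * exp b := by nlinarith [one_le_exp hb]
    _ ≤ exp a * exp b := by gcongr; linarith [add_one_le_exp a]
    _ = exp (a + b) := (exp_add a b).symm

lemma gaussianTail_mul_sqrt_one_sub_le {x ε : ℝ} (hx : 0 ≤ x) (hε : 0 ≤ ε) (hε1 : ε ≤ 1) :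
    gaussianTail (x * √(1 - ε)) ≤ exp (2 * (1 + x ^ 2) * ε) * gaussianTail x := by
  have hs1 : √(1 - ε) ≤ 1 := sqrt_le_one.2 (by linarith)
  have hshrink : x - x * √(1 - ε) ≤ x * ε := by
    nlinarith [le_sqrt_self_iff.2 (show 1 - ε ≤ 1 by linarith)]
  have hshift : exp (-(x * √(1 - ε)) ^ 2 / 2) = exp (-x ^ 2 / 2) * exp (x ^ 2 * ε / 2) := by
    rw [← exp_add, mul_pow, sq_sqrt (by linarith)]
    ring_nf
  have hmills : exp (-x ^ 2 / 2) ≤ (x + 1) * gaussianTail x := by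
    rw [← div_le_iff₀' (by linarith)]
    exact exp_neg_sq_div_two_div_le_gaussianTail hx
  have hQ := gaussianTail_nonneg x
  calc gaussianTail (x * √(1 - ε))
      ≤ gaussianTail x + (x - x * √(1 - ε)) * exp (-(x * √(1 - ε)) ^ 2 / 2) :=
        gaussianTail_le_add (by positivity) (mul_le_of_le_one_right hx hs1)
    _ ≤ gaussianTail x + x * ε * exp (-x ^ 2 / 2) * exp (x ^ 2 * ε / 2) := by
        rw [hshift, ← mul_assoc]
        gcongr
    _ ≤ gaussianTail x + x * ε * ((x + 1) * gaussianTail x) * exp (x ^ 2 * ε / 2) := by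
        gcongr
    _ = (1 + (x ^ 2 + x) * ε * exp (x ^ 2 * ε / 2)) * gaussianTail x := by ring
    _ ≤ exp ((x ^ 2 + x) * ε + x ^ 2 * ε / 2) * gaussianTail x := by
        gcongr
        exact one_add_mul_exp_le_exp_add (by positivity)
    _ ≤ exp (2 * (1 + x ^ 2) * ε) * gaussianTail x := by
        gcongr
        nlinarith [sq_nonneg (x - 1)]

/-- There exists `C > 0` such that for all `x ≥ 0` and `0 ≤ ε ≤ 1`,
`(1 - Φ(x√(1-ε)))/(1 - Φ(x)) ≤ exp{C(1 + x²)ε}`. -/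
theorem gaussian_tail_perturbation :
    ∃ C : ℝ, 0 < C ∧ ∀ x ε : ℝ, 0 ≤ x → 0 ≤ ε → ε ≤ 1 →
      (1 - stdGaussianCDF (x * Real.sqrt (1 - ε))) / (1 - stdGaussianCDF x) ≤
        Real.exp (C * (1 + x ^ 2) * ε) := by
  refine ⟨2, two_pos, fun x ε hx hε hε1 => ?_⟩
  have hpos : 0 < gaussianTail x :=
    (div_pos (exp_pos _) (by linarith)).trans_le (exp_neg_sq_div_two_div_le_gaussianTail hx)
  rw [one_sub_stdGaussianCDF, one_sub_stdGaussianCDF, mul_div_mul_left _ _ (by positivity),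
    div_le_iff₀ hpos]
  exact gaussianTail_mul_sqrt_one_sub_le hx hε hε1
end

section
/- Let (S_j°)_{1≤j≤k} be real random variables adapted to a filtration, D_j° = S_j° − E[S_j° | F_{(j−1)m}], and (V_k°)² = Σ_{j=1}^k (S_j°)². If (V_k°)² ≥ (1/2) n σ² and each ‖E[S_j° | F_{(j−1)m}]‖_∞ ≤ ‖E[S_m | F_0]‖_∞ =: B, then | Σ_{j=1}^k (D_j°)² / (V_k°)² − 1 | ≤ (2√(2k)/(√n σ)) B + (2/(m σ²)) B², where k = ⌊n/m⌋. -/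
open MeasureTheory Finset

/-!
Pointwise, with `A = Σ Sⱼ²`, `E = Σ E[Sⱼ | 𝓕_{(j-1)m}]²` and `C = Σ Sⱼ E[Sⱼ | 𝓕_{(j-1)m}]`,
the numerator is `A - 2C + E`, so the ratio minus one is `(E - 2C)/A`. Cauchy–Schwarz gives
`|C| ≤ √(AE)`, hence the deviation is at most `2√(E/A) + E/A`, and `E ≤ kB²`, `A ≥ nσ²/2`,
`km ≤ n` bound `E/A` by `2kB²/(nσ²) ≤ 2B²/(mσ²)`.
-/

lemma abs_sum_sub_sq_div_sum_sq_sub_one_le {ι : Type*} (s : Finset ι) (a e : ι → ℝ)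
    (ha : 0 < ∑ i ∈ s, a i ^ 2) :
    |(∑ i ∈ s, (a i - e i) ^ 2) / (∑ i ∈ s, a i ^ 2) - 1| ≤
      2 * √((∑ i ∈ s, e i ^ 2) / ∑ i ∈ s, a i ^ 2) + (∑ i ∈ s, e i ^ 2) / ∑ i ∈ s, a i ^ 2 := by
  set A := ∑ i ∈ s, a i ^ 2
  set E := ∑ i ∈ s, e i ^ 2
  set C := ∑ i ∈ s, a i * e i
  have hexpand : ∑ i ∈ s, (a i - e i) ^ 2 = A - 2 * C + E := by
    simp only [A, E, C, mul_sum, ← sum_sub_distrib, ← sum_add_distrib]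
    exact sum_congr rfl fun i _ => by ring
  have hC : |C| ≤ A * √(E / A) := by
    have hAE : A * √(E / A) = √(A * E) := by
      rw [Real.sqrt_div' _ ha.le, Real.sqrt_mul ha.le]
      field_simp
      rw [Real.sq_sqrt ha.le, mul_comm]
    exact hAE ▸ Real.abs_le_sqrt (sum_mul_sq_le_sq_mul_sq s a e)
  calc |(∑ i ∈ s, (a i - e i) ^ 2) / A - 1| = |E - 2 * C| / A := by
        rw [hexpand, div_sub_one ha.ne', abs_div, abs_of_pos ha]; congr 2; ring
    _ ≤ (2 * (A * √(E / A)) + E) / A := by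
        gcongr
        rw [abs_le] at hC ⊢
        have hE : 0 ≤ E := sum_nonneg fun i _ => sq_nonneg _
        constructor <;> linarith [hC.1, hC.2]
    _ = _ := by field_simp

lemma sum_sq_le_card_mul_sq {ι : Type*} (s : Finset ι) (e : ι → ℝ) {B : ℝ}
    (he : ∀ i ∈ s, |e i| ≤ B) : ∑ i ∈ s, e i ^ 2 ≤ #s * B ^ 2 := by
  have hsq : ∀ i ∈ s, e i ^ 2 ≤ B ^ 2 := fun i hi =>
    sq_le_sq' (abs_le.1 (he i hi)).1 (abs_le.1 (he i hi)).2
  simpa using sum_le_card_nsmul s _ _ hsq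

lemma Nat.cast_div_div_self_le_one_div (n m : ℕ) : ((n / m : ℕ) : ℝ) / n ≤ 1 / m := by
  rcases n.eq_zero_or_pos with rfl | hn
  · simp
  calc ((n / m : ℕ) : ℝ) / n ≤ (n / m : ℝ) / n := by gcongr; exact Nat.cast_div_le
    _ = 1 / m := by field_simp

theorem block_quadratic_variation_ratio_general
    {Ω : Type*} [m0 : MeasurableSpace Ω] (μ : Measure Ω)
    (𝓕 : ℕ → MeasurableSpace Ω)
    (n m k : ℕ) (hn : 0 < n) (hk : k = n / m)
    (σ B : ℝ) (hσ : 0 < σ) (hB : 0 ≤ B)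
    (S : ℕ → Ω → ℝ)
    (hBj : ∀ j ∈ Finset.Icc 1 k, ∀ᵐ ω ∂μ, |(μ[S j | 𝓕 ((j - 1) * m)]) ω| ≤ B)
    (hV : ∀ᵐ ω ∂μ, (n : ℝ) * σ ^ 2 / 2 ≤ ∑ j ∈ Finset.Icc 1 k, (S j ω) ^ 2) :
    ∀ᵐ ω ∂μ,
      |(∑ j ∈ Finset.Icc 1 k, (S j ω - (μ[S j | 𝓕 ((j - 1) * m)]) ω) ^ 2) /
          (∑ j ∈ Finset.Icc 1 k, (S j ω) ^ 2) - 1| ≤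
        2 * Real.sqrt (2 * k) / (Real.sqrt n * σ) * B + 2 / (m * σ ^ 2) * B ^ 2 := by
  filter_upwards [(Filter.eventually_all_finset _).2 hBj, hV] with ω hBω hVω
  set A := ∑ j ∈ Icc 1 k, S j ω ^ 2
  set E := ∑ j ∈ Icc 1 k, (μ[S j | 𝓕 ((j - 1) * m)]) ω ^ 2
  have hA : 0 < A := lt_of_lt_of_le (by positivity) hVω
  have hEA : E / A ≤ 2 * k / (n * σ ^ 2) * B ^ 2 := by
    have hE : E ≤ k * B ^ 2 := by simpa using sum_sq_le_card_mul_sq _ _ hBω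
    calc E / A ≤ k * B ^ 2 / (n * σ ^ 2 / 2) := by gcongr
      _ = _ := by ring
  have hsqrt : √(2 * k / (n * σ ^ 2) * B ^ 2) = √(2 * k) / (√n * σ) * B := by
    rw [Real.sqrt_mul (by positivity), Real.sqrt_div' _ (by positivity),
      Real.sqrt_mul' _ (sq_nonneg σ), Real.sqrt_sq hσ.le, Real.sqrt_sq hB]
  have hkn : 2 * k / (n * σ ^ 2) * B ^ 2 ≤ 2 / (m * σ ^ 2) * B ^ 2 := by
    have hkn' : (k : ℝ) / n ≤ 1 / m := hk ▸ Nat.cast_div_div_self_le_one_div n m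
    calc 2 * k / (n * σ ^ 2) * B ^ 2 = 2 / σ ^ 2 * B ^ 2 * (k / n) := by ring
      _ ≤ 2 / σ ^ 2 * B ^ 2 * (1 / m) := by gcongr
      _ = _ := by ring
  calc _ ≤ 2 * √(E / A) + E / A := abs_sum_sub_sq_div_sum_sq_sub_one_le _ _ _ hA
    _ ≤ 2 * √(2 * k / (n * σ ^ 2) * B ^ 2) + 2 / (m * σ ^ 2) * B ^ 2 := by
        gcongr; exact hEA.trans hkn
    _ = _ := by rw [hsqrt]; ring

/-- If `(V_k°)² ≥ (1/2) n σ²` and `‖E[S_j° | 𝓕_{(j−1)m}]‖_∞ ≤ B` for every `j`, then with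
`D_j° = S_j° − E[S_j° | 𝓕_{(j−1)m}]` and `k = ⌊n/m⌋`,
`|Σ_{j=1}^k (D_j°)²/(V_k°)² − 1| ≤ (2√(2k)/(√n σ)) B + (2/(m σ²)) B²`. -/
theorem block_quadratic_variation_ratio
    {Ω : Type*} [m0 : MeasurableSpace Ω] (μ : Measure Ω) [IsProbabilityMeasure μ]
    (𝓕 : ℕ → MeasurableSpace Ω) (h𝓕 : ∀ i, 𝓕 i ≤ m0)
    (n m k : ℕ) (hn : 0 < n) (hm : 0 < m) (hk : k = n / m)
    (σ B : ℝ) (hσ : 0 < σ) (hB : 0 ≤ B)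
    (S : ℕ → Ω → ℝ) (hint : ∀ j, Integrable (S j) μ)
    (hBj : ∀ j ∈ Finset.Icc 1 k, ∀ᵐ ω ∂μ, |(μ[S j | 𝓕 ((j - 1) * m)]) ω| ≤ B)
    (hV : ∀ᵐ ω ∂μ, (n : ℝ) * σ ^ 2 / 2 ≤ ∑ j ∈ Finset.Icc 1 k, (S j ω) ^ 2) :
    ∀ᵐ ω ∂μ,
      |(∑ j ∈ Finset.Icc 1 k, (S j ω - (μ[S j | 𝓕 ((j - 1) * m)]) ω) ^ 2) /
          (∑ j ∈ Finset.Icc 1 k, (S j ω) ^ 2) - 1| ≤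
        2 * Real.sqrt (2 * k) / (Real.sqrt n * σ) * B + 2 / (m * σ ^ 2) * B ^ 2 :=
  block_quadratic_variation_ratio_general (m0 := m0) μ 𝓕 n m k hn hk σ B hσ hB S hBj hV
end
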